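/- Consistency of the difference-of-means plug-in estimator: suppose for each N the estimated latent outcomes satisfy max_i ‖L̂_i − L_i⁰(T_i)‖ → 0 in probability, the true potential outcomes L⁰(t) are i.i.d. with finite mean, T is i.i.d. Bernoulli(p) with 0 < p < 1 and independent of the potential outcomes. Then ψ̂_DM = (1/N₁)Σ_{i:Tᵢ=1}L̂_i − (1/N₀)Σ_{i:Tᵢ=0}L̂_i converges in probability to ψ = E[L⁰(1)] − E[L⁰(0)] as N → ∞. -/

import Mathlib

/-!
By independence of `T` from the potential outcomes, `E[1{T = b} L(b)] = P(T = b) E[L(b)]`, so the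
strong law applied to the i.i.d. sequences `1{Tᵢ = b} Lᵢ(b)` and `1{Tᵢ = b}` shows that the oracle
group means, computed from the true potential outcomes, converge almost surely (hence in
probability) to `E[L(b)]`. A group mean of the estimated outcomes differs from the oracle one by at
most `maxᵢ |L̂ᵢ − Lᵢ(Tᵢ)|` (an empty group has mean `0` for both), and this maximum is small outside
an event of vanishing probability.
-/

open MeasureTheory ProbabilityTheory Filter Finset
open scoped Topology BigOperators

namespace Finset

variable {ι : Type*}

lemma expect_filter_eq_sum_ite_div (s : Finset ι) (q : ι → Prop) [DecidablePred q] (f : ι → ℝ) :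
    𝔼 i ∈ s with q i, f i =
      (∑ i ∈ s, if q i then f i else 0) / ∑ i ∈ s, if q i then (1 : ℝ) else 0 := by
  rw [expect_eq_sum_div_card, sum_filter, sum_boole]

lemma abs_expect_sub_expect_le {s : Finset ι} {f g : ι → ℝ} {δ : ℝ} (hδ : 0 ≤ δ)
    (hfg : ∀ i ∈ s, |f i - g i| ≤ δ) : |𝔼 i ∈ s, f i - 𝔼 i ∈ s, g i| ≤ δ := by
  rcases s.eq_empty_or_nonempty with rfl | hs
  · simpa using hδ
  rw [← expect_sub_distrib]
  exact (abs_expect_le _ _).trans (expect_le hs hfg)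

noncomputable def diffInMeans (s : Finset ι) (t : ι → Bool) (y₀ y₁ : ι → ℝ) : ℝ :=
  𝔼 i ∈ s with t i = true, y₁ i - 𝔼 i ∈ s with t i = false, y₀ i

lemma diffInMeans_eq_sum_ite_div (s : Finset ι) (t : ι → Bool) (y₀ y₁ : ι → ℝ) :
    diffInMeans s t y₀ y₁ =
      (∑ i ∈ s, if t i then y₁ i else 0) / (∑ i ∈ s, if t i then (1 : ℝ) else 0) -
        (∑ i ∈ s, if t i then 0 else y₀ i) / (∑ i ∈ s, if t i then 0 else (1 : ℝ)) := by
  rw [diffInMeans, expect_filter_eq_sum_ite_div, expect_filter_eq_sum_ite_div]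
  congr 2 <;> refine sum_congr rfl fun i _ => ?_ <;> cases t i <;> rfl

lemma abs_diffInMeans_sub_diffInMeans_le {s : Finset ι} {t : ι → Bool} {y x₀ x₁ : ι → ℝ} {δ : ℝ}
    (hδ : 0 ≤ δ) (h : ∀ i ∈ s, |y i - if t i then x₁ i else x₀ i| ≤ δ) :
    |diffInMeans s t y y - diffInMeans s t x₀ x₁| ≤ 2 * δ := by
  rw [diffInMeans, diffInMeans, sub_sub_sub_comm, two_mul]
  refine (abs_sub _ _).trans (add_le_add ?_ ?_) <;>
    refine abs_expect_sub_expect_le hδ fun i hi => ?_ <;>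
    rw [mem_filter] at hi <;> simpa [hi.2] using h i hi.1

end Finset

lemma tendsto_div_of_tendsto_div_natCast {u v : ℕ → ℝ} {a b : ℝ}
    (hu : Tendsto (fun n : ℕ => u n / n) atTop (𝓝 a))
    (hv : Tendsto (fun n : ℕ => v n / n) atTop (𝓝 b)) (hb : b ≠ 0) :
    Tendsto (fun n => u n / v n) atTop (𝓝 (a / b)) := by
  refine (hu.div hv hb).congr' ?_
  filter_upwards [eventually_ne_atTop 0] with n hn
  exact div_div_div_cancel_right₀ (Nat.cast_ne_zero.mpr hn) _ _

section

variable {Ω : Type*} [MeasurableSpace Ω] {P : Measure Ω}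

lemma integral_ite_eq_measureReal {α : Type*} [MeasurableSpace α] [MeasurableSingletonClass α]
    [DecidableEq α] {T : Ω → α} (hT : Measurable T) (b : α) :
    ∫ ω, (if T ω = b then (1 : ℝ) else 0) ∂P = P.real {ω | T ω = b} := by
  rw [← integral_indicator_one (s := {ω | T ω = b}) (hT (measurableSet_singleton b))]
  congr 1 with ω
  simp [Set.indicator_apply]

lemma ProbabilityTheory.IndepFun.integral_ite_eq_mul {α : Type*} [MeasurableSpace α]
    [MeasurableSingletonClass α] [DecidableEq α] {T : Ω → α} {Y : Ω → ℝ} (hTY : IndepFun T Y P)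
    (hT : Measurable T) (hY : AEStronglyMeasurable Y P) (b : α) :
    ∫ ω, (if T ω = b then Y ω else 0) ∂P = P.real {ω | T ω = b} * ∫ ω, Y ω ∂P := by
  have hφ : Measurable fun a : α => if a = b then (1 : ℝ) else 0 :=
    measurable_const.ite (measurableSet_singleton b) measurable_const
  have hind : IndepFun (fun ω => if T ω = b then (1 : ℝ) else 0) Y P :=
    hTY.comp hφ measurable_id
  rw [← integral_ite_eq_measureReal hT b,
    ← hind.integral_fun_mul_eq_mul_integral (hφ.comp hT).aestronglyMeasurable hY]
  congr 1 with ω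
  split_ifs <;> simp

lemma measurable_diffInMeans {ι : Type*} (s : Finset ι) {T : ι → Ω → Bool}
    (hT : ∀ i, Measurable (T i)) {Y₀ Y₁ : ι → Ω → ℝ} (hY₀ : ∀ i, Measurable (Y₀ i))
    (hY₁ : ∀ i, Measurable (Y₁ i)) :
    Measurable fun ω => diffInMeans s (T · ω) (Y₀ · ω) (Y₁ · ω) := by
  have hgroup : ∀ i, MeasurableSet {ω | T i ω = true} :=
    fun i => hT i (measurableSet_singleton true)
  simp only [diffInMeans_eq_sum_ite_div]
  exact ((measurable_sum _ fun i _ => (hY₁ i).ite (hgroup i) measurable_const).div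
    (measurable_sum _ fun i _ => measurable_const.ite (hgroup i) measurable_const)).sub
    ((measurable_sum _ fun i _ => measurable_const.ite (hgroup i) (hY₀ i)).div
    (measurable_sum _ fun i _ => measurable_const.ite (hgroup i) measurable_const))

lemma prob_eq_false_eq_one_sub [IsProbabilityMeasure P] {T : Ω → Bool} (hT : Measurable T) :
    P {ω | T ω = false} = 1 - P {ω | T ω = true} := by
  rw [← prob_compl_eq_one_sub (s := {ω | T ω = true}) (hT (measurableSet_singleton true))]
  congr 1 with ω
  simp

lemma tendsto_measure_le_abs_sub_of_tendstoInMeasure {X Y : ℕ → Ω → ℝ} {x ε δ : ℝ}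
    (hX : TendstoInMeasure P X atTop fun _ => x) {E : ℕ → Set Ω}
    (hE : Tendsto (fun n => P (E n)) atTop (𝓝 0)) (hYX : ∀ n, ∀ ω ∉ E n, |Y n ω - X n ω| ≤ δ)
    (hδ : δ < ε) : Tendsto (fun n => P {ω | ε ≤ |Y n ω - x|}) atTop (𝓝 0) := by
  have hsub : ∀ n, {ω | ε ≤ |Y n ω - x|} ⊆ {ω | ε - δ ≤ dist (X n ω) x} ∪ E n := by
    intro n ω hω
    by_contra hcon
    simp only [Set.mem_union, Set.mem_ofPred_eq, not_or, not_le, Real.dist_eq] at hω hcon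
    linarith [abs_sub_le (Y n ω) (X n ω) x, hYX n ω hcon.2]
  have hlim := (tendstoInMeasure_iff_dist.mp hX (ε - δ) (sub_pos.mpr hδ)).add hE
  rw [add_zero] at hlim
  exact tendsto_of_tendsto_of_tendsto_of_le_of_le tendsto_const_nhds hlim (fun _ => zero_le)
    fun n => (measure_mono (hsub n)).trans (measure_union_le _ _)

variable {E : Type*} [MeasurableSpace E] {Z : ℕ → Ω → E}

lemma ae_tendsto_sum_comp_div_natCast (hindep : iIndepFun Z P)
    (hident : ∀ i, IdentDistrib (Z i) (Z 0) P P) {g : E → ℝ} (hg : Measurable g)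
    (hint : Integrable (fun ω => g (Z 0 ω)) P) :
    ∀ᵐ ω ∂P, Tendsto (fun n : ℕ => (∑ i ∈ range n, g (Z i ω)) / n) atTop
      (𝓝 (∫ ω, g (Z 0 ω) ∂P)) :=
  strong_law_ae_real (fun i ω => g (Z i ω)) hint
    (fun _ _ hij => (hindep.indepFun hij).comp hg hg) fun i => (hident i).comp hg

lemma ae_tendsto_expect_filter [IsFiniteMeasure P] (hindep : iIndepFun Z P)
    (hident : ∀ i, IdentDistrib (Z i) (Z 0) P P) (hZ : Measurable (Z 0))
    {c : E → Bool} (hc : Measurable c) {f : E → ℝ} (hf : Measurable f)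
    (hint : Integrable (fun ω => f (Z 0 ω)) P)
    (hcf : IndepFun (fun ω => c (Z 0 ω)) (fun ω => f (Z 0 ω)) P) {b : Bool}
    (hb : P {ω | c (Z 0 ω) = b} ≠ 0) :
    ∀ᵐ ω ∂P, Tendsto (fun n => 𝔼 i ∈ range n with c (Z i ω) = b, f (Z i ω)) atTop
      (𝓝 (∫ ω, f (Z 0 ω) ∂P)) := by
  have hgroup : MeasurableSet {z | c z = b} := hc (measurableSet_singleton b)
  have hcount := ae_tendsto_sum_comp_div_natCast hindep hident
    (g := fun z => if c z = b then 1 else 0) (measurable_const.ite hgroup measurable_const)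
    ((integrable_const (1 : ℝ)).mono
      ((measurable_const.ite hgroup measurable_const).comp hZ).aestronglyMeasurable
      (ae_of_all _ fun ω => by split_ifs <;> simp))
  have hsum := ae_tendsto_sum_comp_div_natCast hindep hident
    (g := fun z => if c z = b then f z else 0) (hf.ite hgroup measurable_const)
    (hint.mono ((hf.ite hgroup measurable_const).comp hZ).aestronglyMeasurable
      (ae_of_all _ fun ω => by split_ifs <;> simp))
  rw [integral_ite_eq_measureReal (T := fun ω => c (Z 0 ω)) (hc.comp hZ) b] at hcount
  rw [hcf.integral_ite_eq_mul (hc.comp hZ) hint.1] at hsum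
  have hb' : P.real {ω | c (Z 0 ω) = b} ≠ 0 :=
    (measureReal_ne_zero_iff (measure_ne_top _ _)).mpr hb
  filter_upwards [hsum, hcount] with ω hsum hcount
  simp only [expect_filter_eq_sum_ite_div]
  simpa [hb'] using tendsto_div_of_tendsto_div_natCast hsum hcount hb'

end

theorem dm_estimator_consistent_general
    {Ω : Type*} [MeasurableSpace Ω] (P : Measure Ω) [IsProbabilityMeasure P]
    (L0 L1 : ℕ → Ω → ℝ) (T : ℕ → Ω → Bool) (p : ℝ) (hp0 : 0 < p) (hp1 : p < 1)
    (hmeas0 : ∀ i, Measurable (L0 i)) (hmeas1 : ∀ i, Measurable (L1 i))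
    (hmeasT : ∀ i, Measurable (T i))
    (hiid_indep : iIndepFun
      (fun i ω => (L0 i ω, L1 i ω, T i ω)) P)
    (hiid_ident : ∀ i, IdentDistrib (fun ω => (L0 i ω, L1 i ω, T i ω))
      (fun ω => (L0 0 ω, L1 0 ω, T 0 ω)) P P)
    (hbern : ∀ i, P {ω | T i ω = true} = ENNReal.ofReal p)
    (hTindep : ∀ i, IndepFun (T i) (fun ω => (L0 i ω, L1 i ω)) P)
    (hint0 : Integrable (L0 0) P) (hint1 : Integrable (L1 0) P)
    (Lhat : ℕ → ℕ → Ω → ℝ)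
    (hunif : ∀ ε : ℝ, 0 < ε →
      Tendsto (fun N => P {ω | ∃ i < N,
        ε ≤ |Lhat N i ω - (if T i ω then L1 i ω else L0 i ω)|})
        atTop (nhds 0))
    (ψhat : ℕ → Ω → ℝ)
    (hψhat : ∀ N ω, ψhat N ω =
      (∑ i ∈ Finset.range N, if T i ω then Lhat N i ω else 0) /
        (∑ i ∈ Finset.range N, if T i ω then (1 : ℝ) else 0) -
      (∑ i ∈ Finset.range N, if T i ω then 0 else Lhat N i ω) /
        (∑ i ∈ Finset.range N, if T i ω then 0 else (1 : ℝ))) :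
    ∀ ε : ℝ, 0 < ε →
      Tendsto (fun N =>
          P {ω | ε ≤ |ψhat N ω - ((∫ ω, L1 0 ω ∂P) - ∫ ω, L0 0 ω ∂P)|})
        atTop (nhds 0) := by
  intro ε hε
  have hZ : Measurable fun ω => (L0 0 ω, L1 0 ω, T 0 ω) :=
    (hmeas0 0).prodMk ((hmeas1 0).prodMk (hmeasT 0))
  have htreated : P {ω | T 0 ω = true} ≠ 0 := by
    simpa [hbern] using hp0
  have hcontrol : P {ω | T 0 ω = false} ≠ 0 := by
    simpa [prob_eq_false_eq_one_sub (hmeasT 0), hbern, tsub_eq_zero_iff_le] using hp1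
  have h1 := ae_tendsto_expect_filter hiid_indep hiid_ident hZ measurable_snd.snd
    measurable_snd.fst hint1 ((hTindep 0).comp measurable_id measurable_snd) htreated
  have h0 := ae_tendsto_expect_filter hiid_indep hiid_ident hZ measurable_snd.snd
    measurable_fst hint0 ((hTindep 0).comp measurable_id measurable_fst) hcontrol
  have horacle : TendstoInMeasure P
      (fun N ω => diffInMeans (range N) (T · ω) (L0 · ω) (L1 · ω)) atTop
      (fun _ => (∫ ω, L1 0 ω ∂P) - ∫ ω, L0 0 ω ∂P) :=
    tendstoInMeasure_of_tendsto_ae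
      (fun N => (measurable_diffInMeans _ hmeasT hmeas0 hmeas1).aestronglyMeasurable)
      (by filter_upwards [h1, h0] with ω h1 h0 using h1.sub h0)
  refine tendsto_measure_le_abs_sub_of_tendstoInMeasure horacle (hunif (ε / 4) (by positivity))
    (fun N ω hω => ?_) (by linarith : 2 * (ε / 4) < ε)
  simp only [Set.mem_ofPred_eq, not_exists, not_and, not_le] at hω
  rw [hψhat, ← diffInMeans_eq_sum_ite_div]
  exact abs_diffInMeans_sub_diffInMeans_le (by positivity) fun i hi => (hω i (mem_range.mp hi)).le

/-- Consistency of the difference-of-means plug-in estimator: if the learned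
latent outcomes are uniformly (over `i`) consistent for the true potential
outcomes at the observed treatment level, the `(L_i(0), L_i(1), T_i)` are
i.i.d. with `T_i ~ Bernoulli(p)`, `0 < p < 1`, independent of the potential
outcomes and the potential outcomes are integrable, then the
difference-of-means estimator converges in probability to
`ψ = E[L(1)] − E[L(0)]`. -/
theorem dm_estimator_consistent
    {Ω : Type*} [MeasurableSpace Ω] (P : Measure Ω) [IsProbabilityMeasure P]
    (L0 L1 : ℕ → Ω → ℝ) (T : ℕ → Ω → Bool) (p : ℝ) (hp0 : 0 < p) (hp1 : p < 1)
    (hmeas0 : ∀ i, Measurable (L0 i)) (hmeas1 : ∀ i, Measurable (L1 i))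
    (hmeasT : ∀ i, Measurable (T i))
    (hiid_indep : iIndepFun
      (fun i ω => (L0 i ω, L1 i ω, T i ω)) P)
    (hiid_ident : ∀ i, IdentDistrib (fun ω => (L0 i ω, L1 i ω, T i ω))
      (fun ω => (L0 0 ω, L1 0 ω, T 0 ω)) P P)
    (hbern : ∀ i, P {ω | T i ω = true} = ENNReal.ofReal p)
    (hTindep : ∀ i, IndepFun (T i) (fun ω => (L0 i ω, L1 i ω)) P)
    (hint0 : Integrable (L0 0) P) (hint1 : Integrable (L1 0) P)
    (Lhat : ℕ → ℕ → Ω → ℝ) (hmeashat : ∀ N i, Measurable (Lhat N i))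
    (hunif : ∀ ε : ℝ, 0 < ε →
      Tendsto (fun N => P {ω | ∃ i < N,
        ε ≤ |Lhat N i ω - (if T i ω then L1 i ω else L0 i ω)|})
        atTop (nhds 0))
    (ψhat : ℕ → Ω → ℝ)
    (hψhat : ∀ N ω, ψhat N ω =
      (∑ i ∈ Finset.range N, if T i ω then Lhat N i ω else 0) /
        (∑ i ∈ Finset.range N, if T i ω then (1 : ℝ) else 0) -
      (∑ i ∈ Finset.range N, if T i ω then 0 else Lhat N i ω) /
        (∑ i ∈ Finset.range N, if T i ω then 0 else (1 : ℝ))) :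
    ∀ ε : ℝ, 0 < ε →
      Tendsto (fun N =>
          P {ω | ε ≤ |ψhat N ω - ((∫ ω, L1 0 ω ∂P) - ∫ ω, L0 0 ω ∂P)|})
        atTop (nhds 0) :=
  dm_estimator_consistent_general P L0 L1 T p hp0 hp1 hmeas0 hmeas1 hmeasT hiid_indep hiid_ident
    hbern hTindep hint0 hint1 Lhat hunif ψhat hψhat
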